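/- arXiv:1205.3816 — 3 statements merged into one kernel-verified Lean document; each statement's English description precedes it below -/
import Mathlib

section
/- Let G be a finite simple graph and M a near-perfect matching of G whose unique exposed vertex is v. Then G is factor-critical if and only if for every vertex u of G there exists an M-balanced path from u to v. -/
open SimpleGraph

variable {V : Type*}

/-- A set of edges is pairwise vertex-disjoint. -/
def DisjointEdges (N : Set (Sym2 V)) : Prop :=
  ∀ e ∈ N, ∀ f ∈ N, e ≠ f → ∀ x : V, x ∈ e → x ∉ f

/-- `M` is a matching of `G`: a set of pairwise vertex-disjoint edges of `G`. -/
def IsMatchingSet (G : SimpleGraph V) (M : Set (Sym2 V)) : Prop :=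
  M ⊆ G.edgeSet ∧ DisjointEdges M

/-- `M` is a perfect matching of `G`: a matching covering every vertex. -/
def IsPerfectMatchingSet (G : SimpleGraph V) (M : Set (Sym2 V)) : Prop :=
  IsMatchingSet G M ∧ ∀ v : V, ∃ e ∈ M, v ∈ e

/-- `M` is a near-perfect matching of `G` whose unique exposed vertex is `v`. -/
def IsNearPerfectMatchingSet (G : SimpleGraph V) (M : Set (Sym2 V)) (v : V) : Prop :=
  IsMatchingSet G M ∧ (∀ e ∈ M, v ∉ e) ∧ ∀ u : V, u ≠ v → ∃ e ∈ M, u ∈ e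

/-- The induced subgraph `G[X]` has a perfect matching. -/
def HasPMOn (G : SimpleGraph V) (X : Set V) : Prop :=
  ∃ M : Set (Sym2 V), IsMatchingSet G M ∧ (∀ e ∈ M, ∀ x : V, x ∈ e → x ∈ X) ∧
    ∀ v ∈ X, ∃ e ∈ M, v ∈ e

/-- `G` is factorizable: it has a perfect matching. -/
def Factorizable (G : SimpleGraph V) : Prop :=
  ∃ M : Set (Sym2 V), IsPerfectMatchingSet G M

/-- `G` is factor-critical: deleting any single vertex leaves a factorizable graph. -/
def FactorCritical (G : SimpleGraph V) : Prop :=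
  ∀ v : V, HasPMOn G {v}ᶜ

/-- A walk is `M`-alternating: its edges outside `M` are pairwise vertex-disjoint. -/
def MAlternating (M : Set (Sym2 V)) {G : SimpleGraph V} {u v : V} (p : G.Walk u v) : Prop :=
  ∀ e ∈ p.edges, ∀ f ∈ p.edges, e ∉ M → f ∉ M → e ≠ f → ∀ x : V, x ∈ e → x ∉ f

/-- An `M`-saturated path: a path with an odd number of edges such that `M ∩ E(P)`
is a perfect matching of `P`. -/
def IsSaturatedPath (M : Set (Sym2 V)) {G : SimpleGraph V} {u v : V} (p : G.Walk u v) : Prop :=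
  p.IsPath ∧ Odd p.length ∧ ∀ x ∈ p.support, ∃ e ∈ p.edges, e ∈ M ∧ x ∈ e

/-- An `M`-exposed path: a path with an odd number of edges such that `E(P) \ M`
is a perfect matching of `P`. -/
def IsExposedPath (M : Set (Sym2 V)) {G : SimpleGraph V} {u v : V} (p : G.Walk u v) : Prop :=
  p.IsPath ∧ Odd p.length ∧ ∀ x ∈ p.support, ∃ e ∈ p.edges, e ∉ M ∧ x ∈ e

/-- An `M`-balanced path from `u` to `v`: an `M`-alternating path with an even number
of edges whose first edge (the one incident with `u`) belongs to `M`; a trivial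
one-vertex path is `M`-balanced. -/
def IsBalancedPath (M : Set (Sym2 V)) {G : SimpleGraph V} {u v : V} (p : G.Walk u v) : Prop :=
  p.IsPath ∧ Even p.length ∧ MAlternating M p ∧ ∀ e ∈ p.edges.head?, e ∈ M

/-- An edge of `G` is allowed if it lies in some perfect matching of `G`. -/
def Allowed (G : SimpleGraph V) (e : Sym2 V) : Prop :=
  ∃ M : Set (Sym2 V), IsPerfectMatchingSet G M ∧ e ∈ M

/-- The spanning subgraph of `G` formed by its allowed edges. -/
def allowedSubgraph (G : SimpleGraph V) : SimpleGraph V where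
  Adj u v := G.Adj u v ∧ Allowed G s(u, v)
  symm := by
    constructor
    intro u v h
    refine ⟨h.1.symm, ?_⟩
    rw [Sym2.eq_swap]
    exact h.2
  loopless := ⟨fun v h => G.loopless.irrefl v h.1⟩

/-- `C` is (the vertex set of) a factor-component of `G`: a connected component of the
spanning subgraph of `G` formed by the allowed edges (the factor-component itself being
the induced subgraph `G[C]`). -/
def IsFactorComponent (G : SimpleGraph V) (C : Set V) : Prop :=
  ∃ c : (allowedSubgraph G).ConnectedComponent, C = c.supp

/-- `G` is elementary: it is factorizable and has exactly one factor-component. -/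
def Elementary (G : SimpleGraph V) : Prop :=
  Factorizable G ∧ (allowedSubgraph G).Connected

/-- `X` is a separating set of `G`. -/
def Separating (G : SimpleGraph V) (X : Set V) : Prop :=
  ∀ C : Set V, IsFactorComponent G C → C ⊆ X ∨ Disjoint C X

/-- The contraction `G[X]/S`: the induced subgraph of `G` on `X` with `S` contracted
to a single vertex (the vertex `none`), deleting loops and parallel edges. -/
def contractOn (G : SimpleGraph V) (X S : Set V) : SimpleGraph (Option ↥(X \ S)) where
  Adj a b :=
    match a, b with
    | some x, some y => G.Adj x.1 y.1
    | some x, none => ∃ s ∈ S, G.Adj x.1 s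
    | none, some y => ∃ s ∈ S, G.Adj y.1 s
    | none, none => False
  symm := by
    constructor
    rintro (_ | x) (_ | y) h
    · exact h.elim
    · exact h
    · exact h
    · exact h.symm
  loopless := by
    constructor
    rintro (_ | x) h
    · exact h.elim
    · exact G.loopless.irrefl x.1 h

/-- `X` is a critical-inducing set for the factor-component (with vertex set) `C1`:
a separating set containing `C1` such that `G[X]/C1` is factor-critical. -/
def CriticalInducing (G : SimpleGraph V) (C1 X : Set V) : Prop :=
  Separating G X ∧ C1 ⊆ X ∧ FactorCritical (contractOn G X C1)

/-- `C1 ⊵ C2`: there is a critical-inducing set for `C1` to `C2`. -/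
def Yield (G : SimpleGraph V) (C1 C2 : Set V) : Prop :=
  ∃ X : Set V, CriticalInducing G C1 X ∧ C2 ⊆ X

/-- `u ∼ v`: `u = v` or `G - u - v` has no perfect matching. -/
def SimRel (G : SimpleGraph V) (u v : V) : Prop :=
  u = v ∨ ¬ HasPMOn G (({u, v} : Set V)ᶜ)

/-- An `M`-ear relative to the vertex set `X`: a path whose two end vertices lie in `X`
and whose internal vertices do not (or a cycle with exactly one vertex in `X`), such
that the ear minus `X` is an `M`-saturated path. -/
def IsMEar (G : SimpleGraph V) (M : Set (Sym2 V)) (X : Set V) {u v : V}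
    (p : G.Walk u v) : Prop :=
  u ∈ X ∧ v ∈ X ∧ ((∃ h : u = v, (p.copy rfl h.symm).IsCycle) ∨ (u ≠ v ∧ p.IsPath)) ∧
  ∃ (x y : V) (hux : G.Adj u x) (q : G.Walk x y) (hyv : G.Adj y v),
    p = SimpleGraph.Walk.cons hux (q.concat hyv) ∧
    IsSaturatedPath M q ∧ ∀ w ∈ q.support, w ∉ X

/-- An `M`-ear relative to `X` through (the factor-component with vertex set) `C`:
some internal vertex of the ear lies in `C`. -/
def IsMEarThrough (G : SimpleGraph V) (M : Set (Sym2 V)) (X C : Set V) {u v : V}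
    (p : G.Walk u v) : Prop :=
  IsMEar G M X p ∧ ∃ w ∈ p.support, w ∉ X ∧ w ∈ C

/-- An `M`-ear sequence `(H 0, …, H k)` of pairwise distinct factor-components,
where for each `i` there is an `M`-ear relative to `H i` through `H (i+1)`. -/
def IsMEarSequence (G : SimpleGraph V) (M : Set (Sym2 V)) (k : ℕ)
    (H : Fin (k + 1) → Set V) : Prop :=
  (∀ i, IsFactorComponent G (H i)) ∧ Function.Injective H ∧
  ∀ i : Fin k, ∃ (u v : V) (p : G.Walk u v),
    IsMEarThrough G M (H i.castSucc) (H i.succ) p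

/-! Both directions compare `M` with a second matching through a symmetric difference.
Switching `M` along a balanced path from `w` to `v` moves the exposed vertex from `v` to `w`:
by induction the rest of the path, starting at `u₂`, switches `M` to a matching exposing `u₂`,
and the first two edges `w u₁ u₂` then trade the matching edge `w u₁` for `u₁ u₂`.
Conversely, let `N` be a perfect matching of `G - u`. From `u` follow the `M`-edge to `u₁` and
then the `N`-edge to `u₂`; trading that `N`-edge for `u u₁` gives a matching `N'` exposing `u₂`
with `M ∆ N'` smaller than `M ∆ N`, so by induction there is a balanced path from `u₂` inside
`M ∆ N'`, and it avoids `u` and `u₁`, which lie on the common edge `u u₁` of `M` and `N'`. -/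

open scoped symmDiff

section

variable {G : SimpleGraph V} {M N : Set (Sym2 V)}

namespace DisjointEdges

theorem mono (hN : DisjointEdges N) (hMN : M ⊆ N) : DisjointEdges M :=
  fun e he f hf => hN e (hMN he) f (hMN hf)

theorem insert (hN : DisjointEdges N) {e : Sym2 V} (he : ∀ f ∈ N, f ≠ e → ∀ x ∈ e, x ∉ f) :
    DisjointEdges (insert e N) := by
  rintro f (rfl | hf) g (rfl | hg) hfg x hxf hxg
  · exact hfg rfl
  · exact he g hg (Ne.symm hfg) x hxf hxg
  · exact he f hf hfg x hxg hxf
  · exact hN f hf g hg hfg x hxf hxg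

theorem notMem_of_mem_symmDiff (hM : DisjointEdges M) (hN : DisjointEdges N) {e f : Sym2 V}
    (heM : e ∈ M) (heN : e ∈ N) {x : V} (hx : x ∈ e) (hf : f ∈ M ∆ N) : x ∉ f := by
  rcases hf with ⟨hfM, hfN⟩ | ⟨hfN, hfM⟩
  · exact hM e heM f hfM (by rintro rfl; exact hfN heN) x hx
  · exact hN e heN f hfN (by rintro rfl; exact hfM heM) x hx

end DisjointEdges

theorem IsNearPerfectMatchingSet.shift {a b w : V} (hM : IsNearPerfectMatchingSet G M a)
    (hbw : s(b, w) ∈ M) (hab : G.Adj a b) :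
    IsNearPerfectMatchingSet G (insert s(a, b) (M \ {s(b, w)})) w := by
  obtain ⟨⟨hMG, hMd⟩, ha, hcov⟩ := hM
  have hb : ∀ f ∈ M, f ≠ s(b, w) → b ∉ f :=
    fun f hf hne => hMd _ hbw f hf hne.symm b (Sym2.mem_mk_left b w)
  refine ⟨⟨?_, ?_⟩, ?_, ?_⟩
  · rintro e (rfl | ⟨he, -⟩)
    exacts [hab, hMG he]
  · refine (hMd.mono Set.sdiff_subset).insert ?_
    rintro f ⟨hf, hf'⟩ - x hx
    rcases Sym2.mem_iff.mp hx with rfl | rfl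
    · exact ha f hf
    · exact hb f hf hf'
  · rintro e (rfl | ⟨he, hne⟩) hw
    · rcases Sym2.mem_iff.mp hw with rfl | rfl
      · exact ha _ hbw (Sym2.mem_mk_right _ _)
      · exact (hMG hbw).ne rfl
    · exact hMd _ hbw e he (Ne.symm hne) w (Sym2.mem_mk_right b w) hw
  · intro x hxw
    by_cases hxab : x = a ∨ x = b
    · exact ⟨s(a, b), Set.mem_insert _ _, Sym2.mem_iff.mpr hxab⟩
    push Not at hxab
    obtain ⟨e, he, hxe⟩ := hcov x hxab.1
    refine ⟨e, Or.inr ⟨he, fun hbw' => ?_⟩, hxe⟩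
    rw [Set.mem_singleton_iff.mp hbw', Sym2.mem_iff] at hxe
    exact hxe.elim hxab.2 hxw

theorem hasPMOn_compl_singleton_iff {u : V} :
    HasPMOn G {u}ᶜ ↔ ∃ N, IsNearPerfectMatchingSet G N u :=
  ⟨fun ⟨N, hN, hX, hcov⟩ => ⟨N, hN, fun e he hu => hX e he u hu rfl, hcov⟩,
    fun ⟨N, hN, hu, hcov⟩ => ⟨N, hN, fun e he _ hx hxu => hu e he (hxu ▸ hx), hcov⟩⟩

namespace IsBalancedPath

theorem nil {v : V} : IsBalancedPath M (Walk.nil : G.Walk v v) :=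
  ⟨Walk.IsPath.nil, ⟨0, rfl⟩, by simp [MAlternating], by simp⟩

theorem mem_of_start_mem {u v : V} {p : G.Walk u v} (hp : IsBalancedPath M p) {e : Sym2 V}
    (he : e ∈ p.edges) (hu : u ∈ e) : e ∈ M := by
  cases p with
  | nil => simp at he
  | cons h q =>
    rcases List.mem_cons.mp he with rfl | he
    · exact hp.2.2.2 _ rfl
    · exact absurd (q.mem_support_of_mem_edges he hu) ((Walk.cons_isPath_iff h q).mp hp.1).2

theorem cons_cons {w u₁ u₂ v : V} {h₁ : G.Adj w u₁} {h₂ : G.Adj u₁ u₂} {r : G.Walk u₂ v}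
    (hp : (Walk.cons h₁ (Walk.cons h₂ r)).IsPath) (he₁ : s(w, u₁) ∈ M) (he₂ : s(u₁, u₂) ∉ M)
    (hr : IsBalancedPath M r) : IsBalancedPath M (Walk.cons h₁ (Walk.cons h₂ r)) := by
  have hu₁ : u₁ ∉ r.support := (Walk.cons_isPath_iff _ _).mp hp.of_cons |>.2
  have hfar : ∀ f ∈ r.edges, f ∉ M → ∀ x ∈ s(u₁, u₂), x ∉ f := by
    intro f hf hfM x hx hxf
    rcases Sym2.mem_iff.mp hx with rfl | rfl
    · exact hu₁ (r.mem_support_of_mem_edges hf hxf)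
    · exact hfM (hr.mem_of_start_mem hf hxf)
  obtain ⟨-, ⟨k, hk⟩, halt, -⟩ := hr
  refine ⟨hp, ⟨k + 1, by simp [hk]; ring⟩, ?_, fun e he => ?_⟩
  · intro e he f hf heM hfM hef x hxe hxf
    simp only [Walk.edges_cons, List.mem_cons] at he hf
    rcases he with rfl | rfl | he <;> rcases hf with rfl | rfl | hf
    all_goals first
      | exact heM he₁ | exact hfM he₁ | exact hef rfl
      | exact hfar _ hf hfM x hxe hxf | exact hfar _ he heM x hxf hxe
      | exact halt e he f hf heM hfM hef x hxe hxf
  · simp only [Walk.edges_cons, List.head?_cons, Option.mem_def, Option.some.injEq] at he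
    exact he ▸ he₁

theorem exists_eq_cons_cons (hMd : DisjointEdges M) {w v : V} {p : G.Walk w v}
    (hp : IsBalancedPath M p) (hwv : w ≠ v) :
    ∃ (u₁ u₂ : V) (h₁ : G.Adj w u₁) (h₂ : G.Adj u₁ u₂) (r : G.Walk u₂ v),
      p = Walk.cons h₁ (Walk.cons h₂ r) ∧ s(w, u₁) ∈ M ∧ s(u₁, u₂) ∉ M ∧
        IsBalancedPath M r := by
  obtain ⟨hpath, ⟨k, hk⟩, halt, hhead⟩ := hp
  rcases p with _ | ⟨h₁, _ | ⟨h₂, r⟩⟩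
  · exact absurd rfl hwv
  · simp only [Walk.length_cons, Walk.length_nil] at hk; omega
  have hnodup := hpath.isTrail.edges_nodup
  simp only [Walk.edges_cons, List.nodup_cons, List.mem_cons, not_or] at hnodup
  have he₁ : s(w, _) ∈ M := hhead _ rfl
  have he₂ : s(_, _) ∉ M := fun he₂ => hMd _ he₁ _ he₂ hnodup.1.1 _
    (Sym2.mem_mk_right _ _) (Sym2.mem_mk_left _ _)
  refine ⟨_, _, h₁, h₂, r, rfl, he₁, he₂, hpath.of_cons.of_cons,
    ⟨k - 1, by simp only [Walk.length_cons] at hk; omega⟩,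
    fun e he f hf => halt e (by simp [he]) f (by simp [hf]), ?_⟩
  rcases r with _ | ⟨h₃, t⟩
  · simp
  rintro e ⟨⟩
  by_contra he₃
  exact halt _ (by simp) _ (by simp) he₂ he₃ (fun h => hnodup.2.1 (by simp [h])) _
    (Sym2.mem_mk_right _ _) (Sym2.mem_mk_left _ _)

theorem isNearPerfectMatchingSet_symmDiff {v w : V}
    (hM : IsNearPerfectMatchingSet G M v) {p : G.Walk w v} (hp : IsBalancedPath M p) :
    IsNearPerfectMatchingSet G (M ∆ p.edgeSet) w := by
  induction hn : p.length using Nat.strong_induction_on generalizing w with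
  | _ n ih =>
  by_cases hwv : w = v
  · subst hwv
    rw [(Walk.isPath_iff_nil.mp hp.1).eq_nil]
    simpa [← Set.bot_eq_empty] using hM
  obtain ⟨u₁, u₂, h₁, h₂, r, rfl, he₁, he₂, hr⟩ := hp.exists_eq_cons_cons hM.1.2 hwv
  have hnodup := hp.1.isTrail.edges_nodup
  simp only [Walk.edges_cons, List.nodup_cons, List.mem_cons, not_or] at hnodup
  have hr' := ih r.length (by simp only [Walk.length_cons] at hn; omega) hr rfl
  have := hr'.shift (b := u₁) (w := w) (by rw [Sym2.eq_swap]; exact Or.inl ⟨he₁, hnodup.1.2⟩)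
    h₂.symm
  convert this using 1
  ext e
  simp only [Set.mem_symmDiff, Walk.edgeSet_cons, Set.mem_insert_iff, Walk.mem_edgeSet,
    Set.mem_sdiff, Set.mem_singleton_iff]
  rw [Sym2.eq_swap (a := u₂), Sym2.eq_swap (a := u₁) (b := w)]
  grind

end IsBalancedPath

theorem IsNearPerfectMatchingSet.exists_isBalancedPath [Finite V] {u v : V}
    (hM : IsNearPerfectMatchingSet G M v) (hN : IsNearPerfectMatchingSet G N u) :
    ∃ p : G.Walk u v, IsBalancedPath M p ∧ p.edgeSet ⊆ M ∆ N := by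
  induction hn : (M ∆ N).ncard using Nat.strong_induction_on generalizing u N with
  | _ n ih =>
  by_cases huv : u = v
  · subst huv
    exact ⟨.nil, .nil, by simp⟩
  obtain ⟨e₁, he₁, hue₁⟩ := hM.2.2 u huv
  obtain ⟨u₁, rfl⟩ := Sym2.mem_iff_exists.mp hue₁
  have h₁ : G.Adj u u₁ := hM.1.1 he₁
  have hu₁v : u₁ ≠ v := fun h => hM.2.1 _ he₁ (h ▸ Sym2.mem_mk_right _ _)
  obtain ⟨e₂, he₂, hue₂⟩ := hN.2.2 u₁ h₁.ne'
  obtain ⟨u₂, rfl⟩ := Sym2.mem_iff_exists.mp hue₂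
  have h₂ : G.Adj u₁ u₂ := hN.1.1 he₂
  have he₁N : s(u, u₁) ∉ N := fun h => hN.2.1 _ h (Sym2.mem_mk_left _ _)
  have he₂M : s(u₁, u₂) ∉ M := fun h => hM.1.2 _ he₁ _ h
    (by rintro hq; exact he₁N (hq ▸ he₂)) u₁ (Sym2.mem_mk_right _ _) (Sym2.mem_mk_left _ _)
  set N' := insert s(u, u₁) (N \ {s(u₁, u₂)})
  have hN' : IsNearPerfectMatchingSet G N' u₂ := hN.shift he₂ h₁
  have hsub : M ∆ N' ⊆ M ∆ N := by
    intro e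
    simp only [N', Set.mem_symmDiff, Set.mem_insert_iff, Set.mem_sdiff, Set.mem_singleton_iff]
    grind
  have hlt : (M ∆ N').ncard < n := hn ▸ Set.ncard_lt_ncard
    ((Set.ssubset_iff_of_subset hsub).mpr
      ⟨_, Or.inl ⟨he₁, he₁N⟩, by simp [N', Set.mem_symmDiff, he₁]⟩)
  obtain ⟨r, hr, hrE⟩ := ih _ hlt hN' rfl
  have hoff : ∀ x ∈ s(u, u₁), x ≠ v → x ∉ r.support := by
    intro x hx hxv hxr
    obtain rfl | ⟨f, hf, hxf⟩ := Walk.mem_support_iff_exists_mem_edges.mp hxr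
    · exact hxv rfl
    · exact hM.1.2.notMem_of_mem_symmDiff hN'.1.2 he₁ (Set.mem_insert _ _) hx (hrE hf) hxf
  refine ⟨.cons h₁ (.cons h₂ r), .cons_cons ?_ he₁ he₂M hr, ?_⟩
  · simp only [Walk.cons_isPath_iff, Walk.support_cons, List.mem_cons, not_or]
    exact ⟨⟨hr.1, hoff u₁ (Sym2.mem_mk_right _ _) hu₁v⟩, h₁.ne,
      hoff u (Sym2.mem_mk_left _ _) huv⟩
  · intro e
    simp only [Walk.edgeSet_cons, Set.mem_insert_iff]
    rintro (rfl | rfl | he)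
    exacts [Or.inl ⟨he₁, he₁N⟩, Or.inr ⟨he₂, he₂M⟩, hsub (hrE he)]

end

/-- Let `G` be a finite simple graph and `M` a near-perfect matching of `G`
whose unique exposed vertex is `v`. Then `G` is factor-critical if and only if for every
vertex `u` of `G` there exists an `M`-balanced path from `u` to `v`. -/
theorem statement_0 {V : Type*} [Fintype V] (G : SimpleGraph V) (M : Set (Sym2 V)) (v : V)
    (hM : IsNearPerfectMatchingSet G M v) :
    FactorCritical G ↔ ∀ u : V, ∃ p : G.Walk u v, IsBalancedPath M p := by
  refine ⟨fun hFC u => ?_, fun h w => ?_⟩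
  · obtain ⟨N, hN⟩ := hasPMOn_compl_singleton_iff.mp (hFC u)
    obtain ⟨p, hp, -⟩ := hM.exists_isBalancedPath hN
    exact ⟨p, hp⟩
  · obtain ⟨p, hp⟩ := h w
    exact hasPMOn_compl_singleton_iff.mpr ⟨_, hp.isNearPerfectMatchingSet_symmDiff hM⟩
end

section
/- Let G be a factor-critical finite simple graph, v ∈ V(G), and M a near-perfect matching of G exposing v. Then for every edge e = vu of G there exists a cycle C in G containing e such that C is nice (i.e., G − V(C) has a perfect matching) and C is an M-ear relative to {v}, i.e., exactly one vertex of C lies in {v} and C − v is an M-saturated path. -/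
open SimpleGraph

variable {V : Type*}

/-!
Let `M'` be a perfect matching of `G - u`. In `M ∆ M'` the vertices `v` and `u` have degree one
and every other vertex has degree zero or two, so following `M'`- and `M`-edges alternately from
`v` traces a path that ends in `u` with an `M`-edge. Closing it with the edge `uv` gives a cycle
whose vertices other than `v` are matched among themselves by `M`; the rest of `M` is then a
perfect matching of `G` minus the cycle.
-/

open Walk

def ClosedUnder (N : Set (Sym2 V)) (S : Set V) : Prop :=
  ∀ e ∈ N, ∀ s ∈ e, s ∈ S → ∀ t ∈ e, t ∈ S

lemma DisjointEdges.eq_of_mem {N : Set (Sym2 V)} (hN : DisjointEdges N) {e f : Sym2 V}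
    (he : e ∈ N) (hf : f ∈ N) {x : V} (hxe : x ∈ e) (hxf : x ∈ f) : e = f :=
  Classical.byContradiction fun hne => hN e he f hf hne x hxe hxf

lemma ClosedUnder.insert_insert {N : Set (Sym2 V)} {S : Set V} (hS : ClosedUnder N S)
    (hN : DisjointEdges N) {a b : V} (hab : s(a, b) ∈ N) :
    ClosedUnder N (insert b (insert a S)) := by
  intro e he s hse hs t hte
  rcases hs with rfl | rfl | hs
  · rw [hN.eq_of_mem he hab hse (Sym2.mem_mk_right a s)] at hte
    rcases Sym2.mem_iff.mp hte with rfl | rfl <;> simp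
  · rw [hN.eq_of_mem he hab hse (Sym2.mem_mk_left s b)] at hte
    rcases Sym2.mem_iff.mp hte with rfl | rfl <;> simp
  · exact Or.inr (Or.inr (hS e he s hse hs t hte))

lemma ClosedUnder.insert_of_forall_notMem {N : Set (Sym2 V)} {S : Set V} (hS : ClosedUnder N S)
    {v : V} (hv : ∀ e ∈ N, v ∉ e) : ClosedUnder N (insert v S) := by
  rintro e he s hse (rfl | hs) t hte
  · exact absurd hse (hv e he)
  · exact Or.inr (hS e he s hse hs t hte)

lemma IsSaturatedPath.closedUnder_support {G : SimpleGraph V} {M : Set (Sym2 V)}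
    (hM : DisjointEdges M) {x y : V} {q : G.Walk x y} (hq : IsSaturatedPath M q) :
    ClosedUnder M {w | w ∈ q.support} := by
  intro e he s hse hs t hte
  obtain ⟨f, hfq, hfM, hsf⟩ := hq.2.2 s hs
  rw [hM.eq_of_mem he hfM hse hsf] at hte
  exact q.mem_support_of_mem_edges hfq hte

lemma hasPMOn_compl_of_closedUnder {G : SimpleGraph V} {M : Set (Sym2 V)} {S : Set V}
    (hM : IsMatchingSet G M) (hcov : ∀ w ∉ S, ∃ e ∈ M, w ∈ e) (hS : ClosedUnder M S) :
    HasPMOn G Sᶜ := by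
  refine ⟨{e ∈ M | ∀ x ∈ e, x ∉ S}, ⟨fun e he => hM.1 he.1, fun e he f hf => hM.2 e he.1 f hf.1⟩,
    fun e he => he.2, fun w hw => ?_⟩
  obtain ⟨e, he, hwe⟩ := hcov w hw
  exact ⟨e, ⟨he, fun t hte htS => hw (hS e he t hte htS w hwe)⟩, hwe⟩

lemma HasPMOn.exists_isNearPerfectMatchingSet {G : SimpleGraph V} {u : V}
    (h : HasPMOn G {u}ᶜ) : ∃ M, IsNearPerfectMatchingSet G M u := by
  obtain ⟨M, hM, hMu, hcov⟩ := h
  exact ⟨M, hM, fun e he hu => hMu e he u hu rfl, hcov⟩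

def CoversTail (M : Set (Sym2 V)) {G : SimpleGraph V} {x y : V} (p : G.Walk x y) : Prop :=
  ∀ w ∈ p.support, w ≠ x → ∃ e ∈ p.edges, e ∈ M ∧ w ∈ e

lemma CoversTail.cons_cons {G : SimpleGraph V} {M : Set (Sym2 V)} {x y z u : V}
    (hxy : G.Adj x y) (hyz : G.Adj y z) (hyzM : s(y, z) ∈ M) {p : G.Walk z u}
    (hp : CoversTail M p) : CoversTail M (cons hxy (cons hyz p)) := by
  simp only [CoversTail, support_cons, List.mem_cons, edges_cons]
  rintro w (rfl | rfl | hw) hwx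
  · exact absurd rfl hwx
  · exact ⟨_, by simp, hyzM, Sym2.mem_mk_left w z⟩
  · by_cases hwz : w = z
    · exact ⟨_, by simp, hyzM, hwz ▸ Sym2.mem_mk_right y z⟩
    · obtain ⟨e, he, heM, hwe⟩ := hp w hw hwz
      exact ⟨e, by simp [he], heM, hwe⟩

/-- `S` is the set of vertices traversed before the current vertex `x`. -/
theorem exists_alternating_path_of_closedUnder [Fintype V] [DecidableEq V] {G : SimpleGraph V}
    {M M' : Set (Sym2 V)} {v u : V}
    (hM : IsNearPerfectMatchingSet G M v) (hM' : IsNearPerfectMatchingSet G M' u)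
    (S : Finset V) (x : V) (hxS : x ∉ S) (huS : u ∉ S)
    (hS' : ClosedUnder M' S) (hS : ClosedUnder M ↑(insert x S)) (hvS : v ∈ insert x S) :
    ∃ p : G.Walk x u, p.IsPath ∧ (∀ w ∈ p.support, w ∉ S) ∧ Even p.length ∧ CoversTail M p := by
  by_cases hxu : x = u
  · subst hxu
    exact ⟨nil, .nil, by simpa using hxS, by simp, by simp [CoversTail]⟩
  obtain ⟨e, hxyM', hxe⟩ := hM'.2.2 x hxu
  obtain ⟨y, rfl⟩ := Sym2.mem_iff_exists.mp hxe
  have hxy : G.Adj x y := hM'.1.1 hxyM'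
  have hyS : y ∉ S := fun hy =>
    hxS (hS' _ hxyM' y (Sym2.mem_mk_right x y) hy x (Sym2.mem_mk_left x y))
  have hyxS : y ∉ insert x S := by simp [hyS, hxy.ne']
  have hyv : y ≠ v := by
    rintro rfl
    exact hyxS hvS
  obtain ⟨f, hyzM, hyf⟩ := hM.2.2 y hyv
  obtain ⟨z, rfl⟩ := Sym2.mem_iff_exists.mp hyf
  have hyz : G.Adj y z := hM.1.1 hyzM
  have hzxS : z ∉ insert x S := fun hz =>
    hyxS (hS _ hyzM z (Sym2.mem_mk_right y z) hz y (Sym2.mem_mk_left y z))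
  have hyu : y ≠ u := fun h => hM'.2.1 _ hxyM' (h ▸ Sym2.mem_mk_right x y)
  have hdec : (insert y (insert x S))ᶜ.card < Sᶜ.card :=
    Finset.card_lt_card (Finset.compl_ssubset_compl.mpr
      (Finset.ssubset_of_ssubset_of_subset (Finset.ssubset_insert hxS) (Finset.subset_insert _ _)))
  obtain ⟨p, hp, hpS, hpe, hpM⟩ := exists_alternating_path_of_closedUnder hM hM'
    (insert y (insert x S)) z (by simpa [hyz.ne'] using hzxS) (by simp [hyu.symm, Ne.symm hxu, huS])
    (by simpa using hS'.insert_insert hM'.1.2 hxyM')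
    (by simpa using hS.insert_insert hM.1.2 hyzM)
    (Finset.mem_insert_of_mem (Finset.mem_insert_of_mem hvS))
  have hxp : x ∉ p.support := fun h => hpS x h (by simp)
  have hyp : y ∉ p.support := fun h => hpS y h (by simp)
  refine ⟨cons hxy (cons hyz p), (hp.cons hyp).cons (by simp [hxy.ne, hxp]), ?_,
    by simpa [Nat.even_add_one] using hpe, hpM.cons_cons hxy hyz hyzM⟩
  simp only [support_cons, List.mem_cons]
  rintro w (rfl | rfl | hw) hwS
  · exact hxS hwS
  · exact hyS hwS
  · exact hpS w hw (by simp [hwS])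
termination_by Sᶜ.card
decreasing_by exact hdec

theorem exists_alternating_path [Fintype V] {G : SimpleGraph V} {M M' : Set (Sym2 V)} {v u : V}
    (hM : IsNearPerfectMatchingSet G M v) (hM' : IsNearPerfectMatchingSet G M' u) :
    ∃ p : G.Walk v u, p.IsPath ∧ Even p.length ∧ CoversTail M p := by
  classical
  obtain ⟨p, hp, -, hpe, hpM⟩ := exists_alternating_path_of_closedUnder hM hM' ∅ v
    (Finset.notMem_empty v) (Finset.notMem_empty u) (by simp [ClosedUnder])
    (by simpa using ClosedUnder.insert_of_forall_notMem (S := ∅) (by simp [ClosedUnder]) hM.2.1)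
    (Finset.mem_insert_self v ∅)
  exact ⟨p, hp, hpe, hpM⟩

theorem exists_nice_isMEar_of_path {G : SimpleGraph V} {M : Set (Sym2 V)} {v u : V}
    (hM : IsNearPerfectMatchingSet G M v) (he : G.Adj v u) (p : G.Walk v u) (hp : p.IsPath)
    (hpe : Even p.length) (hpM : CoversTail M p) :
    ∃ c : G.Walk v v, c.IsCycle ∧ s(v, u) ∈ c.edges ∧
      HasPMOn G {x : V | x ∈ c.support}ᶜ ∧ IsMEar G M {v} c := by
  obtain ⟨y, hvy, q, rfl⟩ := p.exists_eq_cons_of_ne he.ne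
  obtain ⟨hq, hvq⟩ := (cons_isPath_iff _ _).mp hp
  have hqs : IsSaturatedPath M q := by
    refine ⟨hq, by simpa [Nat.even_add_one] using hpe, fun w hw => ?_⟩
    obtain ⟨f, hf, hfM, hwf⟩ := hpM w (by simp [hw]) (by rintro rfl; exact hvq hw)
    rcases List.mem_cons.mp hf with rfl | hf
    · exact absurd (Sym2.mem_mk_left v y) (hM.2.1 _ hfM)
    · exact ⟨f, hf, hfM, hwf⟩
  have hyu : y ≠ u := by
    rintro rfl
    simpa [length_eq_zero_iff.mpr (isPath_iff_nil.mp hq)] using hqs.2.1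
  have hcyc : (cons hvy (q.concat he.symm)).IsCycle := by
    refine (cons_isCycle_iff _ _).mpr ⟨hq.concat hvq he.symm, ?_⟩
    simp only [edges_concat, List.concat_eq_append, List.mem_append, List.mem_singleton,
      Sym2.eq_iff, not_or]
    exact ⟨fun h => hvq (q.fst_mem_support_of_mem_edges h), fun h => he.ne h.1, fun h => hyu h.2⟩
  have hsupp : {x | x ∈ (cons hvy (q.concat he.symm)).support} = insert v {x | x ∈ q.support} := by
    ext x
    simp [support_concat, or_comm]
  refine ⟨_, hcyc, by simp [edges_concat], ?_,
    rfl, rfl, Or.inl ⟨rfl, hcyc⟩, y, u, hvy, q, he.symm, rfl, hqs, fun w hw hwv => hvq (hwv ▸ hw)⟩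
  rw [hsupp]
  refine hasPMOn_compl_of_closedUnder hM.1 (fun w hw => hM.2.2 w fun h => hw (.inl h)) ?_
  exact (hqs.closedUnder_support hM.1.2).insert_of_forall_notMem hM.2.1

/-- Let `G` be a factor-critical finite simple graph, `v ∈ V(G)`, and `M`
a near-perfect matching of `G` exposing `v`. Then for every edge `e = vu` of `G` there is a
cycle `C` in `G` containing `e` such that `C` is nice (`G − V(C)` has a perfect matching)
and `C` is an `M`-ear relative to `{v}`. -/
theorem statement_1 {V : Type*} [Fintype V] (G : SimpleGraph V) (hG : FactorCritical G)
    (v : V) (M : Set (Sym2 V)) (hM : IsNearPerfectMatchingSet G M v)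
    (u : V) (he : G.Adj v u) :
    ∃ p : G.Walk v v, p.IsCycle ∧ s(v, u) ∈ p.edges ∧
      HasPMOn G {x : V | x ∈ p.support}ᶜ ∧ IsMEar G M {v} p := by
  obtain ⟨M', hM'⟩ := (hG u).exists_isNearPerfectMatchingSet
  obtain ⟨p, hp, hpe, hpM⟩ := exists_alternating_path hM hM'
  exact exists_nice_isMEar_of_path hM he p hp hpe hpM
end

section
/- Let G be a factorizable finite simple graph and H a factor-component of G. Let U be the union of the vertex sets of the members of up*(H). Then G[U]/H — the induced subgraph of G on U with V(H) contracted to a single vertex, deleting loops and parallel edges — is factor-critical. -/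
open SimpleGraph

variable {V : Type*}

/-! Fix a perfect matching `M` of `G`. Its edges are allowed, so `M` restricts to a perfect
matching of every separating set. Deleting the contracted vertex from `G[U]/H` leaves
`G[U \ H]`, matched by `M`. Any other vertex `x` lies in a critical-inducing set `X ⊆ U`
for `H`; a perfect matching of `(G[X]/H) - x` together with `M` restricted to the separating
set `U \ X` is a perfect matching of `(G[U]/H) - x`. -/

lemma exists_isFactorComponent_mem (G : SimpleGraph V) (v : V) :
    ∃ C, IsFactorComponent G C ∧ v ∈ C :=
  ⟨_, ⟨(allowedSubgraph G).connectedComponentMk v, rfl⟩, rfl⟩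

section FactorComponents

variable {G : SimpleGraph V}

lemma IsFactorComponent.mem_of_adj {C : Set V} (hC : IsFactorComponent G C) {v w : V}
    (hv : v ∈ C) (hvw : (allowedSubgraph G).Adj v w) : w ∈ C := by
  obtain ⟨c, rfl⟩ := hC
  rw [ConnectedComponent.mem_supp_iff] at hv ⊢
  rw [← hv]
  exact ConnectedComponent.eq.mpr hvw.symm.reachable

lemma IsFactorComponent.eq_of_mem {C D : Set V} (hC : IsFactorComponent G C)
    (hD : IsFactorComponent G D) {v : V} (hvC : v ∈ C) (hvD : v ∈ D) : C = D := by
  obtain ⟨c, rfl⟩ := hC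
  obtain ⟨d, rfl⟩ := hD
  rw [ConnectedComponent.mem_supp_iff] at hvC hvD
  rw [← hvC, ← hvD]

lemma separating_sUnion {𝒞 : Set (Set V)} (h𝒞 : ∀ C ∈ 𝒞, IsFactorComponent G C) :
    Separating G (⋃₀ 𝒞) := by
  intro C hC
  rw [or_iff_not_imp_right, Set.not_disjoint_iff]
  rintro ⟨v, hvC, D, hD𝒞, hvD⟩
  rw [hC.eq_of_mem (h𝒞 D hD𝒞) hvC hvD]
  exact Set.subset_sUnion_of_mem hD𝒞

lemma IsFactorComponent.separating {C : Set V} (hC : IsFactorComponent G C) :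
    Separating G C := by
  simpa using separating_sUnion (𝒞 := {C}) (by simpa using hC)

lemma Separating.diff {X Y : Set V} (hX : Separating G X) (hY : Separating G Y) :
    Separating G (X \ Y) := by
  intro C hC
  rcases hX C hC with hCX | hCX
  · rcases hY C hC with hCY | hCY
    · exact Or.inr (Set.disjoint_of_subset_left hCY Set.disjoint_sdiff_right)
    · exact Or.inl (Set.subset_sdiff.mpr ⟨hCX, hCY⟩)
  · exact Or.inr (hCX.mono_right Set.sdiff_subset)

lemma Separating.subset_of_mem {X C : Set V} (hX : Separating G X)
    (hC : IsFactorComponent G C) {v : V} (hvC : v ∈ C) (hvX : v ∈ X) : C ⊆ X :=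
  (hX C hC).resolve_right fun h => Set.disjoint_left.mp h hvC hvX

lemma Separating.hasPMOn {S : Set V} (hS : Separating G S) (hG : Factorizable G) :
    HasPMOn G S := by
  obtain ⟨M, hM⟩ := hG
  refine ⟨{e | e ∈ M ∧ ∀ x ∈ e, x ∈ S}, ⟨fun e he => hM.1.1 he.1,
    fun e he f hf => hM.1.2 e he.1 f hf.1⟩, fun e he => he.2, fun v hv => ?_⟩
  obtain ⟨e, he, hve⟩ := hM.2 v
  obtain ⟨w, rfl⟩ := Sym2.mem_iff_exists.mp hve
  obtain ⟨C, hC, hvC⟩ := exists_isFactorComponent_mem G v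
  have hw : w ∈ S := hS.subset_of_mem hC hvC hv (hC.mem_of_adj hvC ⟨hM.1.1 he, M, hM, he⟩)
  refine ⟨s(v, w), ⟨he, fun x hx => ?_⟩, Sym2.mem_mk_left v w⟩
  rcases Sym2.mem_iff.mp hx with rfl | rfl
  exacts [hv, hw]

end FactorComponents

section Matchings

variable {W : Type*} {G : SimpleGraph V}

lemma HasPMOn.union {A B : Set V} (hA : HasPMOn G A) (hB : HasPMOn G B) (hAB : Disjoint A B) :
    HasPMOn G (A ∪ B) := by
  obtain ⟨MA, ⟨hMAG, hMAd⟩, hMAin, hMAcov⟩ := hA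
  obtain ⟨MB, ⟨hMBG, hMBd⟩, hMBin, hMBcov⟩ := hB
  have cross : ∀ e ∈ MA, ∀ f ∈ MB, ∀ x, x ∈ e → x ∉ f := fun e he f hf x hxe hxf =>
    Set.disjoint_left.mp hAB (hMAin e he x hxe) (hMBin f hf x hxf)
  refine ⟨MA ∪ MB, ⟨Set.union_subset hMAG hMBG, ?_⟩, ?_, ?_⟩
  · rintro e (he | he) f (hf | hf) hef x hxe
    · exact hMAd e he f hf hef x hxe
    · exact cross e he f hf x hxe
    · exact fun hxf => cross f hf e he x hxf hxe
    · exact hMBd e he f hf hef x hxe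
  · rintro e (he | he) x hx
    exacts [Or.inl (hMAin e he x hx), Or.inr (hMBin e he x hx)]
  · rintro v (hv | hv)
    · obtain ⟨e, he, hve⟩ := hMAcov v hv
      exact ⟨e, Or.inl he, hve⟩
    · obtain ⟨e, he, hve⟩ := hMBcov v hv
      exact ⟨e, Or.inr he, hve⟩

lemma HasPMOn.image {G' : SimpleGraph W} {A : Set V} (hA : HasPMOn G A) {f : V → W}
    (hf : Set.InjOn f A) (hadj : ∀ a ∈ A, ∀ b ∈ A, G.Adj a b → G'.Adj (f a) (f b)) :
    HasPMOn G' (f '' A) := by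
  obtain ⟨M, ⟨hMG, hMd⟩, hMin, hMcov⟩ := hA
  refine ⟨Sym2.map f '' M, ⟨?_, ?_⟩, ?_, ?_⟩
  · rintro _ ⟨e, he, rfl⟩
    induction e using Sym2.ind with
    | _ a b =>
      exact hadj a (hMin _ he a (Sym2.mem_mk_left a b)) b (hMin _ he b (Sym2.mem_mk_right a b))
        (hMG he)
  · rintro _ ⟨e, he, rfl⟩ _ ⟨e', he', rfl⟩ hne _ hx hx'
    obtain ⟨a, ha, rfl⟩ := Sym2.mem_map.mp hx
    obtain ⟨b, hb, hab⟩ := Sym2.mem_map.mp hx'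
    obtain rfl := hf (hMin _ he' b hb) (hMin _ he a ha) hab
    exact hMd e he e' he' (fun h => hne (h ▸ rfl)) b ha hb
  · rintro _ ⟨e, he, rfl⟩ _ hx
    obtain ⟨a, ha, rfl⟩ := Sym2.mem_map.mp hx
    exact ⟨a, hMin e he a ha, rfl⟩
  · rintro _ ⟨a, ha, rfl⟩
    obtain ⟨e, he, hae⟩ := hMcov a ha
    exact ⟨Sym2.map f e, ⟨e, he, rfl⟩, Sym2.mem_map.mpr ⟨a, hae, rfl⟩⟩

end Matchings

section Contraction

variable {G : SimpleGraph V} {X Y S : Set V}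

/-- Vertices outside `X \ S` are sent to the contracted vertex `none`. -/
noncomputable def contractMap (X S : Set V) (v : V) : Option ↥(X \ S) :=
  open Classical in if h : v ∈ X \ S then some ⟨v, h⟩ else none

lemma contractMap_of_mem {v : V} (h : v ∈ X \ S) : contractMap X S v = some ⟨v, h⟩ :=
  dif_pos h

lemma contractMap_injOn : Set.InjOn (contractMap X S) (X \ S) := fun a ha b hb hab => by
  simpa [contractMap_of_mem ha, contractMap_of_mem hb] using hab

lemma contractOn_adj_contractMap {a b : V} (ha : a ∈ X \ S) (hb : b ∈ X \ S) (h : G.Adj a b) :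
    (contractOn G X S).Adj (contractMap X S a) (contractMap X S b) := by
  rwa [contractMap_of_mem ha, contractMap_of_mem hb]

lemma image_contractMap : contractMap X S '' (X \ S) = {none}ᶜ := by
  ext (_ | ⟨v, hv⟩)
  · simp [contractMap]
  · simpa using ⟨v, hv, contractMap_of_mem hv⟩

def contractOnHom (G : SimpleGraph V) (S : Set V) (h : X ⊆ Y) : contractOn G X S →g contractOn G Y S where
  toFun := Option.map (Set.inclusion (Set.sdiff_subset_sdiff_left h))
  map_rel' := by
    rintro (_ | a) (_ | b) hab
    exacts [hab.elim, hab, hab, hab]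

lemma contractOnHom_injective (h : X ⊆ Y) :
    Function.Injective (contractOnHom G S h) :=
  Option.map_injective (Set.inclusion_injective _)

lemma image_contractMap_sdiff (h : X ⊆ Y) (hS : S ⊆ X) :
    contractMap Y S '' (Y \ X) = (Set.range (contractOnHom G S h))ᶜ := by
  ext (_ | ⟨y, hyY, hyS⟩)
  · refine iff_of_false ?_ fun hnone => hnone ⟨none, rfl⟩
    rintro ⟨v, hv, hvnone⟩
    rw [contractMap_of_mem (Set.sdiff_subset_sdiff_right hS hv)] at hvnone
    exact Option.some_ne_none _ hvnone
  · constructor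
    · rintro ⟨v, hv, hvy⟩ ⟨_ | w, hw⟩
      · exact Option.some_ne_none _ hw.symm
      · rw [contractMap_of_mem (Set.sdiff_subset_sdiff_right hS hv)] at hvy
        have hv_eq : v = y := congrArg Subtype.val (Option.some_injective _ hvy)
        have hw_eq : w.1 = y := congrArg Subtype.val (Option.some_injective _ hw)
        exact hv.2 (hv_eq ▸ hw_eq ▸ w.2.1)
    · intro hy
      have hyX : y ∉ X := fun hyX => hy ⟨some ⟨y, hyX, hyS⟩, rfl⟩
      exact ⟨y, ⟨hyY, hyX⟩, contractMap_of_mem _⟩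

end Contraction

theorem statement_17_general {V : Type*} (G : SimpleGraph V) (hG : Factorizable G)
    (C0 : Set V) (hC0 : IsFactorComponent G C0)
    (U : Set V) (hU : U = ⋃₀ {C : Set V | IsFactorComponent G C ∧ Yield G C0 C}) :
    FactorCritical (contractOn G U C0) := by
  have hUsep : Separating G U := hU ▸ separating_sUnion fun C hC => hC.1
  have hsubU : ∀ X, CriticalInducing G C0 X → X ⊆ U := fun X hX v hvX => by
    obtain ⟨C, hC, hvC⟩ := exists_isFactorComponent_mem G v
    exact hU ▸ ⟨C, ⟨hC, X, hX, hX.1.subset_of_mem hC hvC hvX⟩, hvC⟩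
  rintro (_ | ⟨x, hxU, hxC0⟩)
  · rw [← image_contractMap]
    exact ((hUsep.diff hC0.separating).hasPMOn hG).image contractMap_injOn
      fun a ha b hb => contractOn_adj_contractMap ha hb
  · obtain ⟨C, ⟨hC, X, hX, hCX⟩, hxC⟩ := hU ▸ hxU
    have hXU := hsubU X hX
    have hxX : x ∈ X \ C0 := ⟨hCX hxC, hxC0⟩
    have hdiff : U \ X ⊆ U \ C0 := Set.sdiff_subset_sdiff_right hX.2.1
    have hcrit := (hX.2.2 (some ⟨x, hxX⟩)).image (contractOnHom_injective hXU).injOn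
      fun a _ b _ => (contractOnHom G C0 hXU).map_rel
    have hrest : HasPMOn (contractOn G U C0) (Set.range (contractOnHom G C0 hXU))ᶜ := by
      rw [← image_contractMap_sdiff hXU hX.2.1]
      exact ((hUsep.diff hX.1).hasPMOn hG).image (contractMap_injOn.mono hdiff)
        fun a ha b hb => contractOn_adj_contractMap (hdiff ha) (hdiff hb)
    have hsplit : ({some ⟨x, hxU, hxC0⟩} : Set (Option ↥(U \ C0)))ᶜ =
        contractOnHom G C0 hXU '' {some ⟨x, hxX⟩}ᶜ ∪ (Set.range (contractOnHom G C0 hXU))ᶜ := by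
      rw [← (contractOnHom_injective hXU).compl_image_eq, Set.image_singleton]
      rfl
    rw [hsplit]
    exact hcrit.union hrest (disjoint_compl_right.mono_left (Set.image_subset_range _ _))

/-- Let `G` be factorizable and `H` a factor-component. Let `U` be the
union of the vertex sets of the members of `up*(H)`. Then `G[U]/H` is factor-critical. -/
theorem statement_17 {V : Type*} [Fintype V] (G : SimpleGraph V) (hG : Factorizable G)
    (C0 : Set V) (hC0 : IsFactorComponent G C0)
    (U : Set V) (hU : U = ⋃₀ {C : Set V | IsFactorComponent G C ∧ Yield G C0 C}) :
    FactorCritical (contractOn G U C0) :=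
  statement_17_general G hG C0 hC0 U hU
end
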